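/- arXiv:math-ph/9905018 — 4 statements merged into one kernel-verified Lean document; each statement's English description precedes it below -/
import Mathlib

section
/- For n ≠ m, the adjoint representation ad: sl(n|m) → gDer(M(n|m)), E ↦ [E, ·]_g, restricted to the special linear Lie superalgebra sl(n|m), is a Lie superalgebra isomorphism onto the Lie superalgebra of all graded derivations of M(n|m). -/
noncomputable section

/-- The `ℤ₂`-graded algebra `M(n|m)` of complex `(n+m)×(n+m)` matrices. -/
abbrev GMat (n m : ℕ) := Matrix (Fin (n + m)) (Fin (n + m)) ℂ

/-- The "body" matrix algebra `M_{max n m}(ℂ)`. -/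
abbrev BMat (n m : ℕ) := Matrix (Fin (max n m)) (Fin (max n m)) ℂ

namespace GMat

/-- Block degree of an index: `false` for the first (size `n`) block. -/
def bdeg (n m : ℕ) (i : Fin (n + m)) : Bool := decide (n ≤ i.val)

/-- `M` is homogeneous of degree `ε` (block-diagonal for `ε = false`,
block-off-diagonal for `ε = true`). -/
def IsHomog (n m : ℕ) (ε : Bool) (M : GMat n m) : Prop :=
  ∀ i j, Bool.xor (bdeg n m i) (bdeg n m j) ≠ ε → M i j = 0

/-- The Koszul sign `(-1)^{ab}`. -/
def sgn (a b : Bool) : ℂ := if a && b then -1 else 1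

/-- Graded commutator of homogeneous elements of degrees `a`, `b`. -/
def gcomm {n m : ℕ} (a b : Bool) (A B : GMat n m) : GMat n m := A * B - sgn a b • (B * A)

/-- Graded anticommutator of homogeneous elements of degrees `a`, `b`. -/
def gacomm {n m : ℕ} (a b : Bool) (A B : GMat n m) : GMat n m := A * B + sgn a b • (B * A)

/-- The grading matrix `Γ = diag(1_n, -1_m)`. -/
def Gamma (n m : ℕ) : GMat n m := Matrix.diagonal fun i => if bdeg n m i then -1 else 1

/-- `D` is a graded derivation of `M(n|m)` of degree `ε`. -/
def IsGDer (n m : ℕ) (ε : Bool) (D : GMat n m → GMat n m) : Prop :=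
  (∀ A B, D (A + B) = D A + D B) ∧
  (∀ (c : ℂ) A, D (c • A) = c • D A) ∧
  (∀ (a : Bool) M, IsHomog n m a M → IsHomog n m (Bool.xor a ε) (D M)) ∧
  (∀ (a : Bool) (M M' : GMat n m), IsHomog n m a M →
    D (M * M') = D M * M' + sgn ε a • (M * D M'))

/-- The graded adjoint action `ad E` of a homogeneous matrix `E` of degree `a`:
on homogeneous `M` it is the graded commutator `[E,M]_g`. -/
def gad (n m : ℕ) (a : Bool) (E : GMat n m) : GMat n m → GMat n m :=
  fun M => E * M - (if a then Gamma n m * M * Gamma n m * E else M * E)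

/-- The supertrace `str M = Tr M₁ - Tr M₄`. -/
def str (n m : ℕ) (M : GMat n m) : ℂ :=
  ∑ i, (if bdeg n m i then (-1 : ℂ) else 1) * M i i

end GMat

/-!
Conjugation by `Γ = diag(1_n, -1_m)` is the parity automorphism `θ`; for `E` of degree `a`,
`ad E M = E M - θ^a(M) E`, and `θ^a` multiplies a homogeneous `M` of degree `b` by the Koszul
sign `(-1)^{ab}`. With this, the Leibniz rule for `ad E` and the compatibility with graded
brackets are formal identities.

Conversely, for a graded derivation `D` of degree `a`, the map `M ↦ Γ^a D M` is an ordinary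
derivation of the full matrix algebra, because the sign in `Γ^a M = (-1)^{ab} M Γ^a` cancels the
Koszul sign. It is therefore inner, `Γ^a D = [F, ·]`, whence `D = ad (Γ^a F)`; the component of
`Γ^a F` of the wrong degree would shift degrees wrongly, so it acts by zero. Since `n ≠ m`, the
identity has supertrace `n - m ≠ 0` and `ad 1 = 0`, so the even part can be normalised to
supertrace zero, and an even `E` with `ad E = 0` is central, hence scalar, hence zero. An odd `E`
with `ad E = 0` satisfies `0 = ad E Γ = 2 E Γ`.
-/

namespace Matrix

variable {ι R : Type*} [Fintype ι] [DecidableEq ι] [CommRing R]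

theorem exists_eq_mul_sub_mul_of_leibniz (D : Matrix ι ι R →ₗ[R] Matrix ι ι R)
    (hD : ∀ A B, D (A * B) = D A * B + A * D B) :
    ∃ F : Matrix ι ι R, ∀ M, D M = F * M - M * F := by
  cases isEmpty_or_nonempty ι
  · exact ⟨0, fun _ => Subsingleton.elim _ _⟩
  obtain ⟨z⟩ := ‹Nonempty ι›
  let e : ι → ι → Matrix ι ι R := fun i j => single i j 1
  -- `D e_ij = D(e_iz) e_zj + e_iz D(e_zj) = F e_ij + e_ij G`, and `F + G = D 1 = 0`.
  let F := ∑ k, D (e k z) * e z k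
  let G := ∑ k, e k z * D (e z k)
  have hFG : F + G = 0 := by
    have h1 : D 1 = 0 := by simpa using hD 1 1
    rw [← h1, ← sum_single_one, map_sum, ← Finset.sum_add_distrib]
    refine Finset.sum_congr rfl fun k _ => ?_
    rw [← hD, single_mul_single_same, one_mul]
  have hF (i j : ι) : F * e i j = D (e i z) * e z j := by
    rw [Finset.sum_mul, Finset.sum_eq_single i]
    · simp [e, mul_assoc]
    · intro k _ hk
      simp [e, mul_assoc, single_mul_single_of_ne _ _ _ _ hk]
    · simp
  have hG (i j : ι) : e i j * G = e i z * D (e z j) := by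
    rw [Finset.mul_sum, Finset.sum_eq_single j]
    · simp [e, ← mul_assoc]
    · intro k _ hk
      simp [e, ← mul_assoc, single_mul_single_of_ne _ _ _ _ (Ne.symm hk)]
    · simp
  refine ⟨F, fun M => ?_⟩
  suffices D = LinearMap.mulLeft R F - LinearMap.mulRight R F by simp [this]
  refine ext_linearMap (R := R) fun i j => LinearMap.ext_ring ?_
  have hbasis : D (e i j) = F * e i j + e i j * G := by
    rw [hF, hG, ← hD, single_mul_single_same, one_mul]
  simpa [eq_neg_of_add_eq_zero_right hFG, sub_eq_add_neg] using hbasis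

end Matrix

namespace GMat

open Matrix

variable {n m : ℕ}

lemma sgn_comm (a b : Bool) : sgn a b = sgn b a := by
  cases a <;> cases b <;> rfl

lemma sgn_mul_self (a b : Bool) : sgn a b * sgn a b = 1 := by
  cases a <;> cases b <;> norm_num [sgn]

lemma Gamma_mul_Gamma : Gamma n m * Gamma n m = 1 := by
  rw [Gamma, diagonal_mul_diagonal, ← diagonal_one]
  congr 1
  ext i
  split_ifs <;> norm_num

lemma Gamma_mul_mul_Gamma_apply (M : GMat n m) (i j : Fin (n + m)) :
    (Gamma n m * M * Gamma n m) i j = sgn true (Bool.xor (bdeg n m i) (bdeg n m j)) * M i j := by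
  simp only [Gamma, diagonal_mul, mul_diagonal]
  cases bdeg n m i <;> cases bdeg n m j <;> simp [sgn]

def GammaPow (a : Bool) : GMat n m := if a then Gamma n m else 1

lemma GammaPow_mul_self (a : Bool) : GammaPow a * GammaPow a = (1 : GMat n m) := by
  cases a
  · exact one_mul 1
  · exact Gamma_mul_Gamma

def parity (a : Bool) : GMat n m →ₐ[ℂ] GMat n m where
  toFun M := GammaPow a * M * GammaPow a
  map_one' := by rw [mul_one, GammaPow_mul_self]
  map_mul' A B := by
    calc GammaPow a * (A * B) * GammaPow a
        = GammaPow a * A * (GammaPow a * GammaPow a) * B * GammaPow a := by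
          rw [GammaPow_mul_self]; noncomm_ring
      _ = _ := by noncomm_ring
  map_zero' := by simp
  map_add' A B := by noncomm_ring
  commutes' r := by simp [Algebra.algebraMap_eq_smul_one, GammaPow_mul_self]

lemma parity_apply (a : Bool) (M : GMat n m) : parity a M = GammaPow a * M * GammaPow a := rfl

lemma parity_false (M : GMat n m) : parity false M = M := by
  simp [parity_apply, GammaPow]

lemma parity_parity (a b : Bool) (M : GMat n m) :
    parity a (parity b M) = parity (Bool.xor a b) M := by
  cases a <;> cases b <;>
    simp [parity_apply, GammaPow, mul_assoc, ← mul_assoc (Gamma n m) (Gamma n m), Gamma_mul_Gamma]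

lemma gad_apply (a : Bool) (E M : GMat n m) : gad n m a E M = E * M - parity a M * E := by
  cases a <;> simp [gad, parity_apply, GammaPow]

namespace IsHomog

variable {a b : Bool} {M N : GMat n m}

lemma parity_eq (h : IsHomog n m b M) (a : Bool) : parity a M = sgn a b • M := by
  cases a
  · simp [parity_false, sgn]
  ext i j
  rw [parity_apply, GammaPow, if_pos rfl, Gamma_mul_mul_Gamma_apply, Matrix.smul_apply,
    smul_eq_mul]
  by_cases hij : Bool.xor (bdeg n m i) (bdeg n m j) = b
  · rw [hij]
  · rw [h i j hij, mul_zero, mul_zero]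

lemma GammaPow_mul (h : IsHomog n m b M) (a : Bool) :
    GammaPow a * M = sgn a b • (M * GammaPow a) := by
  calc GammaPow a * M = parity a M * GammaPow a := by
        rw [parity_apply, mul_assoc _ (GammaPow a), GammaPow_mul_self, mul_one]
    _ = _ := by rw [h.parity_eq, smul_mul_assoc]

lemma mul (hM : IsHomog n m a M) (hN : IsHomog n m b N) :
    IsHomog n m (Bool.xor a b) (M * N) := by
  intro i j hij
  rw [mul_apply]
  refine Finset.sum_eq_zero fun k _ => ?_
  by_cases hik : Bool.xor (bdeg n m i) (bdeg n m k) = a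
  · by_cases hkj : Bool.xor (bdeg n m k) (bdeg n m j) = b
    · exact absurd (by rw [← hik, ← hkj]; simp) hij
    · rw [hN k j hkj, mul_zero]
  · rw [hM i k hik, zero_mul]

lemma add (hM : IsHomog n m a M) (hN : IsHomog n m a N) : IsHomog n m a (M + N) :=
  fun i j h => by simp [hM i j h, hN i j h]

lemma sub (hM : IsHomog n m a M) (hN : IsHomog n m a N) : IsHomog n m a (M - N) :=
  fun i j h => by simp [hM i j h, hN i j h]

lemma smul (hM : IsHomog n m a M) (c : ℂ) : IsHomog n m a (c • M) :=
  fun i j h => by simp [hM i j h]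

lemma eq_zero_of_not (hM : IsHomog n m a M) (hM' : IsHomog n m (!a) M) : M = 0 := by
  ext i j
  by_cases h : Bool.xor (bdeg n m i) (bdeg n m j) = a
  · exact hM' i j (by simp [h])
  · exact hM i j h

end IsHomog

lemma isHomog_one : IsHomog n m false (1 : GMat n m) :=
  fun _ _ h => one_apply_ne fun hij => h (by simp [hij])

def homogPart (a : Bool) (M : GMat n m) : GMat n m :=
  of fun i j => if Bool.xor (bdeg n m i) (bdeg n m j) = a then M i j else 0

lemma isHomog_homogPart (a : Bool) (M : GMat n m) : IsHomog n m a (homogPart a M) :=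
  fun i j h => by simp [homogPart, h]

lemma homogPart_add_homogPart_not (a : Bool) (M : GMat n m) :
    homogPart a M + homogPart (!a) M = M := by
  ext i j
  cases a <;> by_cases h : bdeg n m i = bdeg n m j <;> simp [homogPart, h]

lemma ext_of_isHomog {f g : GMat n m → GMat n m}
    (hf : ∀ A B, f (A + B) = f A + f B) (hg : ∀ A B, g (A + B) = g A + g B)
    (h : ∀ b M, IsHomog n m b M → f M = g M) : f = g := by
  funext M
  rw [← homogPart_add_homogPart_not false M, hf, hg, h _ _ (isHomog_homogPart _ _),
    h _ _ (isHomog_homogPart _ _)]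

lemma str_add (A B : GMat n m) : str n m (A + B) = str n m A + str n m B := by
  simp only [str, Matrix.add_apply, mul_add, Finset.sum_add_distrib]

lemma str_smul (r : ℂ) (A : GMat n m) : str n m (r • A) = r * str n m A := by
  simp only [str, Matrix.smul_apply, smul_eq_mul, Finset.mul_sum]
  exact Finset.sum_congr rfl fun _ _ => by ring

lemma str_one : str n m 1 = n - m := by
  have hn (i : Fin n) : bdeg n m (Fin.castAdd m i) = false := by simp [bdeg]
  have hm (j : Fin m) : bdeg n m (Fin.natAdd n j) = true := by simp [bdeg]
  simp [str, Fin.sum_univ_add, hn, hm, sub_eq_add_neg]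

lemma str_eq_zero_of_isHomog_true {M : GMat n m} (h : IsHomog n m true M) : str n m M = 0 :=
  Finset.sum_eq_zero fun i _ => by rw [h i i (by simp), mul_zero]

lemma gad_add (a : Bool) (E A B : GMat n m) :
    gad n m a E (A + B) = gad n m a E A + gad n m a E B := by
  simp only [gad_apply, map_add]
  noncomm_ring

lemma gad_smul (a : Bool) (E : GMat n m) (r : ℂ) (A : GMat n m) :
    gad n m a E (r • A) = r • gad n m a E A := by
  simp only [gad_apply, map_smul, smul_mul_assoc, mul_smul_comm, smul_sub]

lemma gad_add_left (a : Bool) (E E' M : GMat n m) :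
    gad n m a (E + E') M = gad n m a E M + gad n m a E' M := by
  simp only [gad_apply]
  noncomm_ring

lemma gad_smul_one (r : ℂ) (M : GMat n m) : gad n m false (r • 1) M = 0 := by
  simp [gad_apply, parity_false]

section Homogeneous

variable {a b : Bool} {E F M : GMat n m}

lemma IsHomog.gad (c : Bool) (hE : IsHomog n m a E) (hM : IsHomog n m b M) :
    IsHomog n m (Bool.xor b a) (gad n m c E M) := by
  rw [gad_apply, hM.parity_eq, Bool.xor_comm]
  exact (hE.mul hM).sub (Bool.xor_comm a b ▸ (hM.smul _).mul hE)

lemma gad_mul (hM : IsHomog n m b M) (M' : GMat n m) :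
    gad n m a E (M * M') = gad n m a E M * M' + sgn a b • (M * gad n m a E M') := by
  simp only [gad_apply, map_mul, hM.parity_eq, smul_mul_assoc, mul_sub, sub_mul, smul_sub,
    mul_assoc]
  abel

lemma isGDer_gad (hE : IsHomog n m a E) : IsGDer n m a (gad n m a E) :=
  ⟨gad_add a E, gad_smul a E, fun _ _ hM => hE.gad a hM, fun _ _ _ hM => gad_mul hM _⟩

lemma gad_gcomm (hE : IsHomog n m a E) (hF : IsHomog n m b F) (M : GMat n m) :
    gad n m (Bool.xor a b) (gcomm a b E F) M =
      gad n m a E (gad n m b F M) - sgn a b • gad n m b F (gad n m a E M) := by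
  simp only [gad_apply, gcomm, map_sub, map_mul, hE.parity_eq, hF.parity_eq, parity_parity,
    Bool.xor_comm b a, sgn_comm b a]
  simp only [mul_sub, sub_mul, smul_sub, smul_mul_assoc, mul_smul_comm, smul_smul,
    sgn_mul_self, one_smul, mul_assoc]
  abel

lemma eq_zero_of_gad_eq_zero (hnm : n ≠ m) (hstr : str n m E = 0) (hE : IsHomog n m a E)
    (h : gad n m a E = fun _ => 0) : E = 0 := by
  have hcomm (M : GMat n m) : E * M = parity a M * E :=
    sub_eq_zero.mp (gad_apply a E M ▸ congrFun h M)
  cases a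
  · obtain ⟨c, rfl⟩ : E ∈ Set.range (scalar (Fin (n + m))) :=
      mem_range_scalar_iff_commute_single'.mpr fun _ _ => (parity_false _ ▸ hcomm _).symm
    have hc : c * ((n : ℂ) - m) = 0 := by
      rwa [scalar_apply, ← smul_one_eq_diagonal, str_smul, str_one] at hstr
    have hnm' : (n : ℂ) - m ≠ 0 := sub_ne_zero.mpr (by exact_mod_cast hnm)
    simp [(mul_eq_zero.mp hc).resolve_right hnm']
  · have hanti : Gamma n m * E = -(E * Gamma n m) := by
      simpa [sgn, GammaPow] using hE.GammaPow_mul true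
    have hsymm : E * Gamma n m = Gamma n m * E := by
      simpa [parity_apply, GammaPow, Gamma_mul_Gamma] using hcomm (Gamma n m)
    have hEG : E * Gamma n m = 0 := by
      ext i j
      exact self_eq_neg.mp (by simpa using congrFun (congrFun (hsymm.trans hanti) i) j)
    calc E = E * Gamma n m * Gamma n m := by rw [mul_assoc, Gamma_mul_Gamma, mul_one]
      _ = 0 := by rw [hEG, zero_mul]

lemma exists_str_eq_zero_gad_eq (hnm : n ≠ m) (hE : IsHomog n m a E) :
    ∃ E', str n m E' = 0 ∧ IsHomog n m a E' ∧ gad n m a E' = gad n m a E := by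
  cases a
  · have hnm' : (n : ℂ) - m ≠ 0 := sub_ne_zero.mpr (by exact_mod_cast hnm)
    refine ⟨E + (-(str n m E / (n - m))) • 1, ?_, hE.add (isHomog_one.smul _),
      funext fun M => by rw [gad_add_left, gad_smul_one, add_zero]⟩
    rw [str_add, str_smul, str_one]
    field_simp
    ring
  · exact ⟨E, str_eq_zero_of_isHomog_true hE, hE, rfl⟩

end Homogeneous

section Derivation

variable {a : Bool} {D : GMat n m → GMat n m}

lemma IsGDer.GammaPow_mul_map_mul (hD : IsGDer n m a D) (A B : GMat n m) :
    GammaPow a * D (A * B) = GammaPow a * D A * B + A * (GammaPow a * D B) := by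
  obtain ⟨hadd, -, -, hmul⟩ := hD
  suffices (fun A => GammaPow a * D (A * B)) =
      fun A => GammaPow a * D A * B + A * (GammaPow a * D B) from congrFun this A
  refine ext_of_isHomog (fun _ _ => by rw [add_mul, hadd, mul_add])
    (fun _ _ => by rw [hadd, mul_add, add_mul, add_mul]; abel) fun b M hM => ?_
  rw [hmul b M B hM, mul_add, mul_smul_comm, ← mul_assoc (GammaPow a) M, hM.GammaPow_mul,
    smul_mul_assoc, smul_smul, sgn_mul_self, one_smul, mul_assoc, mul_assoc]

lemma IsGDer.exists_eq_gad (hD : IsGDer n m a D) : ∃ X, D = gad n m a X := by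
  let D' : GMat n m →ₗ[ℂ] GMat n m :=
    { toFun := fun M => GammaPow a * D M
      map_add' := fun A B => by rw [hD.1, mul_add]
      map_smul' := fun r A => by rw [hD.2.1, mul_smul_comm]; rfl }
  obtain ⟨F, hF⟩ := exists_eq_mul_sub_mul_of_leibniz D' hD.GammaPow_mul_map_mul
  have hΓ := GammaPow_mul_self (n := n) (m := m) a
  refine ⟨GammaPow a * F, funext fun M => ?_⟩
  calc D M = GammaPow a * (GammaPow a * D M) := by rw [← mul_assoc, hΓ, one_mul]
    _ = GammaPow a * (F * M - M * F) := congrArg _ (hF M)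
    _ = GammaPow a * F * M - GammaPow a * M * (GammaPow a * GammaPow a) * F := by
        rw [hΓ]; noncomm_ring
    _ = gad n m a (GammaPow a * F) M := by rw [gad_apply, parity_apply]; noncomm_ring

lemma eq_gad_homogPart (hdeg : ∀ b M, IsHomog n m b M → IsHomog n m (Bool.xor b a) (D M))
    {c : Bool} {X : GMat n m} (hX : D = gad n m c X) : D = gad n m c (homogPart a X) := by
  have hsplit (M : GMat n m) :
      D M = gad n m c (homogPart a X) M + gad n m c (homogPart (!a) X) M := by
    rw [hX, ← gad_add_left, homogPart_add_homogPart_not]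
  have hzero : gad n m c (homogPart (!a) X) = fun _ => 0 := by
    refine ext_of_isHomog (gad_add c _) (fun _ _ => (add_zero 0).symm) fun b M hM => ?_
    have hwrong := (isHomog_homogPart (!a) X).gad c hM
    have hright : IsHomog n m (Bool.xor b a) (gad n m c (homogPart (!a) X) M) := by
      rw [eq_sub_of_add_eq' (hsplit M).symm]
      exact (hdeg b M hM).sub ((isHomog_homogPart a X).gad c hM)
    exact hright.eq_zero_of_not (by simpa using hwrong)
  funext M
  rw [hsplit, hzero, add_zero]

lemma IsGDer.exists_isHomog_eq_gad (hD : IsGDer n m a D) :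
    ∃ X, IsHomog n m a X ∧ D = gad n m a X := by
  obtain ⟨X, hX⟩ := hD.exists_eq_gad
  exact ⟨homogPart a X, isHomog_homogPart a X, eq_gad_homogPart hD.2.2.1 hX⟩

end Derivation

end GMat

/-- For `n ≠ m`, `ad : sl(n|m) → gDer(M(n|m))` is a Lie superalgebra isomorphism:
each `ad E` is a graded derivation, the assignment is injective on homogeneous
supertrace-free matrices, every graded derivation arises this way, and graded
brackets are preserved. -/
theorem ad_sl_iso_gder (n m : ℕ) (hnm : n ≠ m) :
    (∀ (a : Bool) (E : GMat n m), GMat.str n m E = 0 → GMat.IsHomog n m a E →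
      GMat.IsGDer n m a (GMat.gad n m a E)) ∧
    (∀ (a : Bool) (E : GMat n m), GMat.str n m E = 0 → GMat.IsHomog n m a E →
      GMat.gad n m a E = (fun _ => 0) → E = 0) ∧
    (∀ (a : Bool) (D : GMat n m → GMat n m), GMat.IsGDer n m a D →
      ∃ E : GMat n m, GMat.str n m E = 0 ∧ GMat.IsHomog n m a E ∧
        D = GMat.gad n m a E) ∧
    (∀ (a b : Bool) (E F : GMat n m), GMat.str n m E = 0 → GMat.str n m F = 0 →
      GMat.IsHomog n m a E → GMat.IsHomog n m b F →
      ∀ M, GMat.gad n m (Bool.xor a b) (GMat.gcomm a b E F) M =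
        GMat.gad n m a E (GMat.gad n m b F M) -
          GMat.sgn a b • GMat.gad n m b F (GMat.gad n m a E M)) := by
  refine ⟨fun _ _ _ hE => GMat.isGDer_gad hE,
    fun _ _ hstr hE h => GMat.eq_zero_of_gad_eq_zero hnm hstr hE h, fun _ _ hD => ?_,
    fun _ _ _ _ _ _ hE hF M => GMat.gad_gcomm hE hF M⟩
  obtain ⟨X, hX, rfl⟩ := hD.exists_isHomog_eq_gad
  obtain ⟨E, hstr, hE, hEX⟩ := GMat.exists_str_eq_zero_gad_eq hnm hX
  exact ⟨E, hstr, hE, hEX.symm⟩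

end
end

section
/- The even linear map β̂: gDer(M(n|m))₀ → Der(M_{n̲}(ℂ)) defined by β̂(D)(β(M)) = β(DM) is a well-defined surjective Lie algebra homomorphism satisfying β̂(ad E) = ad β(E) for all E ∈ sl(n|m)₀. -/
noncomputable section

namespace GMat

/-- Embedding of the indices of the larger block into `Fin (n+m)`. -/
def emb (n m : ℕ) (i : Fin (max n m)) : Fin (n + m) :=
  if _h : m ≤ n then ⟨i.val, by have := i.isLt; omega⟩
  else ⟨n + i.val, by have := i.isLt; omega⟩

/-- The canonical body map `β : M(n|m) → M_{max n m}(ℂ)`, projection onto the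
larger diagonal block. -/
def beta (n m : ℕ) (M : GMat n m) : BMat n m :=
  Matrix.of fun i j => M (emb n m i) (emb n m j)

end GMat

/-!
An even matrix has no entries linking the corner block kept by `β` to its complement, so
`β (A * B) = β A * β B` as soon as one factor is even. An even graded derivation `D` is an ordinary derivation, and expanding
`D (P X P)` for the corner projection `P` (whose image `D P` is again even) shows that `β (D X)`
depends only on `β X`; hence `D` descends to a derivation `β̂ D` of `M_{max n m}(ℂ)`.
Conversely, every derivation of a full matrix algebra is inner, `ad B`, and `ad B` is the image of
`ad E` for the even extension by zero `E` of `B`.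
-/

namespace Matrix

variable {ι R : Type*} [Fintype ι] [DecidableEq ι]

lemma mul_single_one_eq_sum [Semiring R] (X : Matrix ι ι R) (l z : ι) :
    X * single l z (1 : R) = ∑ k, X k l • single k z 1 := by
  ext a b
  simp [mul_apply, single, sum_apply, ite_and]

lemma single_one_mul_eq_sum [Semiring R] (X : Matrix ι ι R) (z k : ι) :
    single z k (1 : R) * X = ∑ l, X k l • single z l 1 := by
  ext a b
  simp [mul_apply, single, sum_apply, ite_and]

/-- With `E k l = single k l 1` and `B = ∑ k, f (E k z) * E z k`, the sum
`∑ l, f (X * E l z) * E z l` equals `f X + X * B` by the Leibniz rule and `B * X` by linearity. -/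
theorem exists_eq_mul_sub_mul_of_derivation [CommRing R] (f : Matrix ι ι R →ₗ[R] Matrix ι ι R)
    (hf : ∀ X Y, f (X * Y) = f X * Y + X * f Y) : ∃ B, ∀ X, f X = B * X - X * B := by
  rcases isEmpty_or_nonempty ι with _ | ⟨⟨z⟩⟩
  · exact ⟨0, fun _ => Subsingleton.elim _ _⟩
  set B := ∑ k, f (single k z 1) * single z k 1
  refine ⟨B, fun X => eq_sub_of_add_eq ?_⟩
  calc f X + X * B = f X * ∑ l, single l z 1 * single z l 1 + X * B := by
        simp only [single_mul_single_same, mul_one, sum_single_one]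
    _ = ∑ l, f (X * single l z 1) * single z l 1 := by
        simp only [hf, add_mul, Finset.sum_add_distrib, Finset.mul_sum, mul_assoc, B]
    _ = ∑ l, ∑ k, X k l • (f (single k z 1) * single z l 1) := by
        simp only [mul_single_one_eq_sum, map_sum, map_smul, Finset.sum_mul, smul_mul_assoc]
    _ = B * X := by
        rw [Finset.sum_comm]
        simp only [B, Finset.sum_mul, mul_assoc, single_one_mul_eq_sum, Finset.mul_sum,
          mul_smul_comm]

end Matrix

namespace GMat

variable {n m : ℕ}

lemma emb_injective (n m : ℕ) : Function.Injective (emb n m) := by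
  intro a b h
  unfold emb at h
  split at h <;> simpa [Fin.ext_iff] using h

lemma mem_range_emb {k : Fin (n + m)} : k ∈ Set.range (emb n m) ↔ bdeg n m k = decide (n < m) := by
  have hk := k.isLt
  simp only [emb, bdeg, Set.mem_range, Fin.ext_iff, decide_eq_decide]
  split
  · exact ⟨fun ⟨a, ha⟩ => by have := a.isLt; simp only at ha; omega,
      fun h => ⟨⟨k, by omega⟩, rfl⟩⟩
  · exact ⟨fun ⟨a, ha⟩ => by simp only at ha; omega,
      fun h => ⟨⟨k - n, by omega⟩, by simp only; omega⟩⟩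

lemma bdeg_emb (a : Fin (max n m)) : bdeg n m (emb n m a) = decide (n < m) :=
  mem_range_emb.1 ⟨a, rfl⟩

lemma IsHomog.apply_eq_zero {A : GMat n m} (hA : IsHomog n m false A) {i j : Fin (n + m)}
    (h : bdeg n m i ≠ bdeg n m j) : A i j = 0 :=
  hA i j (by simpa using h)

lemma IsHomog.mul_s10 {a b : Bool} {A B : GMat n m} (hA : IsHomog n m a A) (hB : IsHomog n m b B) :
    IsHomog n m (Bool.xor a b) (A * B) := by
  intro i j hij
  rw [Matrix.mul_apply]
  refine Finset.sum_eq_zero fun k _ => ?_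
  by_cases hik : Bool.xor (bdeg n m i) (bdeg n m k) = a
  · rw [hB k j (by rintro rfl; subst hik; simp at hij), mul_zero]
  · rw [hA i k hik, zero_mul]

lemma IsHomog.sub_s10 {a : Bool} {A B : GMat n m} (hA : IsHomog n m a A) (hB : IsHomog n m a B) :
    IsHomog n m a (A - B) := fun i j h => by
  rw [Matrix.sub_apply, hA i j h, hB i j h, sub_zero]

lemma exists_isHomog_add_eq (M : GMat n m) :
    ∃ A B, IsHomog n m false A ∧ IsHomog n m true B ∧ A + B = M := by
  let A : GMat n m := Matrix.of fun i j => if bdeg n m i = bdeg n m j then M i j else 0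
  exact ⟨A, M - A, fun i j h => by simp_all [A], fun i j h => by simp_all [A], add_sub_cancel A M⟩

lemma exists_isHomog_beta_eq (X : BMat n m) : ∃ A, IsHomog n m false A ∧ beta n m A = X := by
  have hinj := (emb_injective n m).prodMap (emb_injective n m)
  refine ⟨Matrix.of fun i j => Function.extend (Prod.map (emb n m) (emb n m))
    (fun p => X p.1 p.2) 0 (i, j), fun i j hij => ?_, ?_⟩
  · rw [Matrix.of_apply]
    refine Function.extend_apply' _ _ (i, j) ?_
    rintro ⟨⟨a, b⟩, hab⟩
    simp only [Prod.map, Prod.mk.injEq] at hab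
    simp [← hab.1, ← hab.2, bdeg_emb] at hij
  · ext a b
    exact hinj.extend_apply (fun p => X p.1 p.2) 0 (a, b)

lemma beta_surjective : Function.Surjective (beta n m) := fun X =>
  (exists_isHomog_beta_eq X).imp fun _ => And.right

lemma beta_add (A B : GMat n m) : beta n m (A + B) = beta n m A + beta n m B := rfl

lemma beta_sub (A B : GMat n m) : beta n m (A - B) = beta n m A - beta n m B := rfl

lemma beta_smul (c : ℂ) (A : GMat n m) : beta n m (c • A) = c • beta n m A := rfl

lemma bdeg_emb_ne_of_notMem_range (a : Fin (max n m)) {k : Fin (n + m)}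
    (hk : k ∉ Set.range (emb n m)) : bdeg n m (emb n m a) ≠ bdeg n m k := by
  intro h
  exact hk (mem_range_emb.2 (by rw [← h, bdeg_emb]))

lemma beta_mul_of_isHomog_left {A : GMat n m} (hA : IsHomog n m false A) (B : GMat n m) :
    beta n m (A * B) = beta n m A * beta n m B := by
  ext a b
  refine (Fintype.sum_of_injective _ (emb_injective n m) _ _ (fun k hk => ?_) fun _ => rfl).symm
  dsimp only
  rw [hA.apply_eq_zero (bdeg_emb_ne_of_notMem_range a hk), zero_mul]

lemma beta_mul_of_isHomog_right (A : GMat n m) {B : GMat n m} (hB : IsHomog n m false B) :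
    beta n m (A * B) = beta n m A * beta n m B := by
  ext a b
  refine (Fintype.sum_of_injective _ (emb_injective n m) _ _ (fun k hk => ?_) fun _ => rfl).symm
  dsimp only
  rw [hB.apply_eq_zero (bdeg_emb_ne_of_notMem_range b hk).symm, mul_zero]

lemma beta_commutator {E : GMat n m} (hE : IsHomog n m false E) (M : GMat n m) :
    beta n m (E * M - M * E) = beta n m E * beta n m M - beta n m M * beta n m E := by
  rw [beta_sub, beta_mul_of_isHomog_left hE, beta_mul_of_isHomog_right _ hE]

def bigBlockProj (n m : ℕ) : GMat n m :=
  Matrix.diagonal fun i => if bdeg n m i = decide (n < m) then 1 else 0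

lemma isHomog_bigBlockProj : IsHomog n m false (bigBlockProj n m) := fun i j h => by
  rw [bigBlockProj, Matrix.diagonal_apply_ne]
  rintro rfl
  simp at h

lemma beta_bigBlockProj : beta n m (bigBlockProj n m) = 1 := by
  ext a b
  simp [beta, bigBlockProj, Matrix.diagonal_apply, (emb_injective n m).eq_iff, bdeg_emb,
    Matrix.one_apply]

lemma bigBlockProj_mul_mul_bigBlockProj_of_beta_eq {X Y : GMat n m}
    (h : beta n m X = beta n m Y) :
    bigBlockProj n m * X * bigBlockProj n m = bigBlockProj n m * Y * bigBlockProj n m := by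
  ext i j
  simp only [bigBlockProj, Matrix.diagonal_mul, Matrix.mul_diagonal]
  split_ifs with hi hj
  · obtain ⟨a, rfl⟩ := mem_range_emb.2 hi
    obtain ⟨b, rfl⟩ := mem_range_emb.2 hj
    simp only [one_mul, mul_one]
    exact congr_fun₂ h a b
  all_goals simp

lemma sgn_false_left (a : Bool) : sgn false a = 1 := by simp [sgn]

namespace IsGDer

variable {D : GMat n m → GMat n m} (hD : IsGDer n m false D)
include hD

lemma map_mul_of_isHomog {a : Bool} {X : GMat n m} (hX : IsHomog n m a X) (Y : GMat n m) :
    D (X * Y) = D X * Y + X * D Y := by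
  rw [hD.2.2.2 a X Y hX, sgn_false_left, one_smul]

lemma map_mul (X Y : GMat n m) : D (X * Y) = D X * Y + X * D Y := by
  obtain ⟨A, B, hA, hB, rfl⟩ := exists_isHomog_add_eq X
  rw [add_mul, hD.1, hD.1, hD.map_mul_of_isHomog hA, hD.map_mul_of_isHomog hB]
  noncomm_ring

lemma isHomog_map {A : GMat n m} (hA : IsHomog n m false A) : IsHomog n m false (D A) :=
  hD.2.2.1 false A hA

lemma beta_map_eq (X : GMat n m) :
    beta n m (D X) = beta n m (D (bigBlockProj n m * X * bigBlockProj n m)) -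
      beta n m (D (bigBlockProj n m)) * beta n m X -
        beta n m X * beta n m (D (bigBlockProj n m)) := by
  have hP := isHomog_bigBlockProj (n := n) (m := m)
  have hDP := hD.isHomog_map hP
  simp only [hD.map_mul, add_mul, beta_add, beta_mul_of_isHomog_right _ hP,
    beta_mul_of_isHomog_right _ hDP, beta_mul_of_isHomog_left hP, beta_mul_of_isHomog_left hDP,
    beta_bigBlockProj]
  noncomm_ring

lemma factorsThrough_beta : (beta n m ∘ D).FactorsThrough (beta n m) := fun X Y h => by
  simp only [Function.comp_apply, hD.beta_map_eq X, hD.beta_map_eq Y, h,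
    bigBlockProj_mul_mul_bigBlockProj_of_beta_eq h]

lemma isDerivation_of_comp_beta {Db : BMat n m → BMat n m}
    (hDb : ∀ M, Db (beta n m M) = beta n m (D M)) :
    (∀ X Y, Db (X + Y) = Db X + Db Y) ∧ (∀ (c : ℂ) X, Db (c • X) = c • Db X) ∧
      ∀ X Y, Db (X * Y) = Db X * Y + X * Db Y := by
  refine ⟨beta_surjective.forall₂.2 fun A B => ?_, fun c => beta_surjective.forall.2 fun A => ?_,
    fun X Y => ?_⟩
  · rw [← beta_add, hDb, hDb, hDb, hD.1, beta_add]
  · rw [← beta_smul, hDb, hDb, hD.2.1, beta_smul]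
  · obtain ⟨A, hA, rfl⟩ := exists_isHomog_beta_eq X
    obtain ⟨B, hB, rfl⟩ := exists_isHomog_beta_eq Y
    rw [← beta_mul_of_isHomog_left hA, hDb, hDb, hDb, hD.map_mul, beta_add,
      beta_mul_of_isHomog_right _ hB, beta_mul_of_isHomog_left hA]

end IsGDer

lemma isGDer_commutator {E : GMat n m} (hE : IsHomog n m false E) :
    IsGDer n m false fun M => E * M - M * E := by
  refine ⟨fun A B => by noncomm_ring,
    fun c A => by simp only [mul_smul_comm, smul_mul_assoc, smul_sub], fun a M hM => ?_,
    fun a M M' _ => ?_⟩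
  · have hEM : IsHomog n m a (E * M) := by simpa using hE.mul_s10 hM
    have hME : IsHomog n m a (M * E) := by simpa using hM.mul_s10 hE
    simpa using hEM.sub_s10 hME
  · rw [sgn_false_left, one_smul]
    noncomm_ring

end GMat

theorem betahat_properties_general (n m : ℕ) :
    (∀ D : GMat n m → GMat n m, GMat.IsGDer n m false D →
      ∃! Db : BMat n m → BMat n m,
        (∀ M : GMat n m, Db (GMat.beta n m M) = GMat.beta n m (D M)) ∧
        (∀ X Y : BMat n m, Db (X + Y) = Db X + Db Y) ∧
        (∀ (c : ℂ) (X : BMat n m), Db (c • X) = c • Db X) ∧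
        (∀ X Y : BMat n m, Db (X * Y) = Db X * Y + X * Db Y)) ∧
    (∀ Db : BMat n m → BMat n m,
      ((∀ X Y : BMat n m, Db (X + Y) = Db X + Db Y) ∧
       (∀ (c : ℂ) (X : BMat n m), Db (c • X) = c • Db X) ∧
       (∀ X Y : BMat n m, Db (X * Y) = Db X * Y + X * Db Y)) →
      ∃ D : GMat n m → GMat n m, GMat.IsGDer n m false D ∧
        ∀ M : GMat n m, Db (GMat.beta n m M) = GMat.beta n m (D M)) ∧
    (∀ D D' : GMat n m → GMat n m, GMat.IsGDer n m false D →
      GMat.IsGDer n m false D' →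
      ∀ Db Db' : BMat n m → BMat n m,
        (∀ M : GMat n m, Db (GMat.beta n m M) = GMat.beta n m (D M)) →
        (∀ M : GMat n m, Db' (GMat.beta n m M) = GMat.beta n m (D' M)) →
        ∀ M : GMat n m, GMat.beta n m (D (D' M) - D' (D M)) =
          Db (Db' (GMat.beta n m M)) - Db' (Db (GMat.beta n m M))) ∧
    (∀ E : GMat n m, GMat.IsHomog n m false E → GMat.str n m E = 0 →
      ∀ M : GMat n m, GMat.beta n m (E * M - M * E) =
        GMat.beta n m E * GMat.beta n m M - GMat.beta n m M * GMat.beta n m E) := by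
  refine ⟨fun D hD => ?_, ?_, ?_, fun E hE _ M => GMat.beta_commutator hE M⟩
  · have hDb := hD.factorsThrough_beta.extend_apply 0
    refine ⟨Function.extend (GMat.beta n m) (GMat.beta n m ∘ D) 0,
      ⟨hDb, hD.isDerivation_of_comp_beta hDb⟩, fun Db' h' => funext ?_⟩
    exact GMat.beta_surjective.forall.2 fun M => (h'.1 M).trans (hDb M).symm
  · rintro Db ⟨hadd, hsmul, hmul⟩
    obtain ⟨B, hB⟩ := Matrix.exists_eq_mul_sub_mul_of_derivation ⟨⟨Db, hadd⟩, hsmul⟩ hmul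
    obtain ⟨E, hE, rfl⟩ := GMat.exists_isHomog_beta_eq B
    exact ⟨_, GMat.isGDer_commutator hE, fun M => (hB _).trans (GMat.beta_commutator hE M).symm⟩
  · intro D D' _ _ Db Db' hDb hDb' M
    simp only [GMat.beta_sub, hDb, hDb']

/-- The induced map `β̂` on even graded derivations, `β̂(D)(β M) = β(D M)`, is a
well-defined surjective Lie algebra homomorphism with `β̂(ad E) = ad (β E)` for
all even supertrace-free `E`. -/
theorem betahat_properties (n m : ℕ) (hnm : n ≠ m) :
    (∀ D : GMat n m → GMat n m, GMat.IsGDer n m false D →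
      ∃! Db : BMat n m → BMat n m,
        (∀ M : GMat n m, Db (GMat.beta n m M) = GMat.beta n m (D M)) ∧
        (∀ X Y : BMat n m, Db (X + Y) = Db X + Db Y) ∧
        (∀ (c : ℂ) (X : BMat n m), Db (c • X) = c • Db X) ∧
        (∀ X Y : BMat n m, Db (X * Y) = Db X * Y + X * Db Y)) ∧
    (∀ Db : BMat n m → BMat n m,
      ((∀ X Y : BMat n m, Db (X + Y) = Db X + Db Y) ∧
       (∀ (c : ℂ) (X : BMat n m), Db (c • X) = c • Db X) ∧
       (∀ X Y : BMat n m, Db (X * Y) = Db X * Y + X * Db Y)) →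
      ∃ D : GMat n m → GMat n m, GMat.IsGDer n m false D ∧
        ∀ M : GMat n m, Db (GMat.beta n m M) = GMat.beta n m (D M)) ∧
    (∀ D D' : GMat n m → GMat n m, GMat.IsGDer n m false D →
      GMat.IsGDer n m false D' →
      ∀ Db Db' : BMat n m → BMat n m,
        (∀ M : GMat n m, Db (GMat.beta n m M) = GMat.beta n m (D M)) →
        (∀ M : GMat n m, Db' (GMat.beta n m M) = GMat.beta n m (D' M)) →
        ∀ M : GMat n m, GMat.beta n m (D (D' M) - D' (D M)) =
          Db (Db' (GMat.beta n m M)) - Db' (Db (GMat.beta n m M))) ∧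
    (∀ E : GMat n m, GMat.IsHomog n m false E → GMat.str n m E = 0 →
      ∀ M : GMat n m, GMat.beta n m (E * M - M * E) =
        GMat.beta n m E * GMat.beta n m M - GMat.beta n m M * GMat.beta n m E) :=
  betahat_properties_general n m

end
end

section
/- The exterior differential of the canonical graded 1-form Θ satisfies dΘ = Θ ∧ Θ, and for every M ∈ M(n|m), dM = [Θ, M] := Θ ∧ M - M ∧ Θ in the graded differential algebra Ω_g(M(n|m)). -/
noncomputable section

namespace GMat

/-- The canonical graded 1-form `Θ`, determined by `Θ(ad E) = E`.  A graded
1-form is recorded by its values on the homogeneous graded derivations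
`ad E` (`E ∈ sl(n|m)` homogeneous of degree `a`). -/
def Theta1 (n m : ℕ) : Bool → GMat n m → GMat n m := fun _ E => E

/-- The Chevalley–Eilenberg exterior differential of an even graded 1-form
`θ`, evaluated on the homogeneous graded derivations `ad E`, `ad F`
(of degrees `a`, `b`):
`dθ(D₀,D₁) = L_{D₀}(θ(D₁)) - (-1)^{ab} L_{D₁}(θ(D₀)) - θ([D₀,D₁])`. -/
def dOneEven (n m : ℕ) (θ : Bool → GMat n m → GMat n m) :
    Bool → GMat n m → Bool → GMat n m → GMat n m :=
  fun a E b F =>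
    gad n m a E (θ b F) - sgn a b • gad n m b F (θ a E) -
      θ (Bool.xor a b) (gcomm a b E F)

/-- The exterior differential of a homogeneous matrix `M` of degree `c`
(a graded 0-form), evaluated on the graded derivation `ad E` of degree `a`:
`dM(D₀) = (-1)^{|D₀||M|} L_{D₀} M`. -/
def dZero (n m : ℕ) (c : Bool) (M : GMat n m) (a : Bool) (E : GMat n m) :
    GMat n m :=
  sgn a c • gad n m a E M

/-- The supertrace-free representative of `M`, generating the same graded
derivation: `M - (str M / (n-m))·1 ∈ sl(n|m)`. -/
def slpart (n m : ℕ) (M : GMat n m) : GMat n m :=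
  M - ((str n m M) / ((n : ℂ) - (m : ℂ))) • (1 : GMat n m)

end GMat

lemma GMat.gamma_conj {n m : ℕ} {c : Bool} {M : GMat n m}
    (h : GMat.IsHomog n m c M) :
    GMat.Gamma n m * M * GMat.Gamma n m = if c then -M else M := by
  ext i j
  rw [GMat.Gamma, Matrix.mul_diagonal, Matrix.diagonal_mul]
  by_cases hc : Bool.xor (bdeg n m i) (bdeg n m j) = c
  · cases c
    · have : bdeg n m i = bdeg n m j := by
        cases hbi : bdeg n m i <;> cases hbj : bdeg n m j <;> simp_all
      rw [this]
      cases hbj : bdeg n m j <;> simp [Matrix.neg_apply] <;> ring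
    · have : bdeg n m i = !(bdeg n m j) := by
        cases hbi : bdeg n m i <;> cases hbj : bdeg n m j <;> simp_all
      rw [this]
      cases hbj : bdeg n m j <;> simp [Matrix.neg_apply] <;> ring
  · simp [h i j hc]
    cases c <;> simp [Matrix.neg_apply, h i j hc]

/-- `dΘ = Θ ∧ Θ`, and for every homogeneous `M`, `dM = [Θ, M] = Θ∧M - M∧Θ`
(all identities evaluated on homogeneous graded derivations `ad E`). -/
theorem dTheta_eq_wedge_and_dM (n m : ℕ) (hnm : n ≠ m) :
    (∀ (a b : Bool) (E F : GMat n m), GMat.str n m E = 0 → GMat.str n m F = 0 →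
      GMat.IsHomog n m a E → GMat.IsHomog n m b F →
      GMat.dOneEven n m (GMat.Theta1 n m) a E b F =
        GMat.Theta1 n m a E * GMat.Theta1 n m b F -
          GMat.sgn a b • (GMat.Theta1 n m b F * GMat.Theta1 n m a E)) ∧
    (∀ (c : Bool) (M : GMat n m), GMat.IsHomog n m c M →
      ∀ (a : Bool) (E : GMat n m), GMat.str n m E = 0 → GMat.IsHomog n m a E →
        GMat.dZero n m c M a E =
          GMat.sgn c a • (GMat.Theta1 n m a E * M) - M * GMat.Theta1 n m a E) := by
  constructor
  · intro a b E F _ _ hE hF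
    have hEc := GMat.gamma_conj hE
    have hFc := GMat.gamma_conj hF
    cases a <;> cases b <;>
      simp [GMat.dOneEven, GMat.gad, GMat.gcomm, GMat.Theta1, GMat.sgn,
        hEc, hFc, Matrix.mul_sub, Matrix.sub_mul, smul_sub, sub_eq_iff_eq_add] <;>
      abel
  · intro c M hM a E _ hE
    have hMc := GMat.gamma_conj hM
    cases a <;> cases c <;>
      simp [GMat.dZero, GMat.gad, GMat.Theta1, GMat.sgn, hMc, smul_sub,
        sub_eq_iff_eq_add] <;>
      abel

end
end

section
/- Every left Z₂-graded finitely generated module over M(n|m) is isomorphic, as a Z₂-graded M(n|m)-module, to M^{r|s}(n|m) := the space of (n+m)×(r+s) complex matrices with the block Z₂-grading, for unique r, s ∈ ℕ₀ with r+s ≥ 1 (plus possibly the zero module); moreover it is a projective module. -/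
noncomputable section

/-- The column module `M^{r|s}(n|m)`: `(n+m)×q` matrices as a left module
over the matrix ring, with the action given by matrix multiplication. -/
instance matrixColumnModule (N q : ℕ) :
    Module (Matrix (Fin N) (Fin N) ℂ) (Matrix (Fin N) (Fin q) ℂ) :=
  { smul := fun A X => A * X
    one_smul := fun X => Matrix.one_mul X
    mul_smul := fun A B X => Matrix.mul_assoc A B X
    smul_zero := fun A => Matrix.mul_zero A
    smul_add := fun A X Y => Matrix.mul_add A X Y
    add_smul := fun A B X => Matrix.add_mul A B X
    zero_smul := fun X => Matrix.zero_mul X }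

namespace GMat

/-- The grading matrix `diag(1_r, -1_s)` on the column index space. -/
def GammaR (r s : ℕ) : Matrix (Fin (r + s)) (Fin (r + s)) ℂ :=
  Matrix.diagonal fun j => if j.val < r then 1 else -1

end GMat

/-!
Let `P = E₀₀` be the first diagonal matrix unit. For a module `V` over `M_N(ℂ)` the corner
`W = P V` is a finite-dimensional vector space, and `v ↦ (E₀ᵢ v)ᵢ` identifies `V` with `W^N`,
that is, with `N × dim W` matrices once a basis of `W` is fixed (Morita equivalence). Since
`Γ P Γ = P`, the grading involution `γ` preserves `W`, and a basis of `W` diagonalising the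
involution `Γ₀₀ γ` of `W` turns `γ` into `X ↦ Γ X Γ_{r,s}`.

For uniqueness, every `M_N(ℂ)`-linear map between column modules is right multiplication by a
matrix `F`; a graded isomorphism therefore gives an invertible `F` with `Γ_{r,s} F = F Γ_{r',s'}`,
and comparing the traces of `1` and of `Γ_{r,s}` gives `r + s = r' + s'` and `r - s = r' - s'`.
Projectivity holds because `M_N(ℂ)` is a semisimple ring.
-/

open Matrix

theorem Matrix.single_mul_eq_sum {n α : Type*} [Fintype n] [DecidableEq n] [Semiring α]
    (z i : n) (A : Matrix n n α) : single z i (1 : α) * A = ∑ k, A i k • single z k (1 : α) := by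
  ext a b
  by_cases h : z = a <;> simp [Matrix.sum_apply, single, mul_apply, h]

theorem Matrix.diagonal_mul_single_mul_diagonal {n α : Type*} [Fintype n] [DecidableEq n]
    [CommSemiring α] (d : n → α) (i k : n) :
    diagonal d * single i k (1 : α) * diagonal d = (d i * d k) • single i k (1 : α) := by
  ext a b
  by_cases h : i = a ∧ k = b
  · obtain ⟨rfl, rfl⟩ := h
    simp
  · simp [single, h]

theorem Matrix.trace_eq_of_mul_eq_mul {m n R : Type*} [Fintype m] [Fintype n] [DecidableEq m]
    [DecidableEq n] [CommRing R] {F : Matrix m n R} {F' : Matrix n m R}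
    (hFF' : F * F' = 1) (hF'F : F' * F = 1) {A : Matrix m m R} {A' : Matrix n n R}
    (h : A * F = F * A') : A.trace = A'.trace :=
  calc A.trace = (A * F * F').trace := by rw [Matrix.mul_assoc, hFF', Matrix.mul_one]
    _ = (F' * (F * A')).trace := by rw [h, trace_mul_comm]
    _ = A'.trace := by rw [← Matrix.mul_assoc, hF'F, Matrix.one_mul]

theorem Module.Basis.equivFun_apply_of_apply_eq_smul {K W ι : Type*} [Field K] [AddCommGroup W]
    [Module K W] [Fintype ι] [DecidableEq ι] (b : Module.Basis ι K W) {T : Module.End K W}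
    {σ : ι → K} (hb : ∀ j, T (b j) = σ j • b j) (w : W) (j : ι) :
    b.equivFun (T w) j = σ j * b.equivFun w j := by
  nth_rw 1 [← b.sum_equivFun w]
  simp only [map_sum, map_smul, hb, smul_smul, b.equivFun_self, Finset.sum_apply, Pi.smul_apply]
  simp [mul_comm]

theorem Module.End.exists_linearEquiv_pi_of_involutive {K W : Type*} [Field K] [NeZero (2 : K)]
    [AddCommGroup W] [Module K W] [FiniteDimensional K W] (T : Module.End K W)
    (hT : ∀ w, T (T w) = w) :
    ∃ r s : ℕ, ∃ φ : W ≃ₗ[K] (Fin (r + s) → K),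
      ∀ w j, φ (T w) j = (if (j : ℕ) < r then 1 else -1) * φ w j := by
  set p : Module.End K W := (2 : K)⁻¹ • (1 + T)
  have hp : IsIdempotentElem p := by
    ext w
    simp only [p, Module.End.mul_apply, LinearMap.smul_apply, LinearMap.add_apply,
      Module.End.one_apply, map_smul, map_add, hT]
    rw [add_comm (T w) w, ← two_smul K, smul_smul, inv_mul_cancel₀ two_ne_zero, one_smul]
  have hrange : ∀ w ∈ LinearMap.range p, T w = w := by
    rintro _ ⟨v, rfl⟩
    simp [p, hT, add_comm]
  have hker : ∀ w ∈ LinearMap.ker p, T w = -w := by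
    intro w hw
    have hw : (2 : K)⁻¹ • (w + T w) = 0 := hw
    rw [smul_eq_zero, or_iff_right (inv_ne_zero two_ne_zero)] at hw
    exact eq_neg_of_add_eq_zero_right hw
  let bA := Module.finBasis K (LinearMap.range p)
  let bB := Module.finBasis K (LinearMap.ker p)
  let b := ((bA.prod bB).map (Submodule.prodEquivOfIsCompl _ _
    (LinearMap.IsIdempotentElem.isCompl hp))).reindex finSumFinEquiv
  have hb : ∀ j, T (b j) =
      (if (j : ℕ) < Module.finrank K (LinearMap.range p) then (1 : K) else -1) • b j := by
    intro j
    refine Fin.addCases (fun a => ?_) (fun a => ?_) j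
    · simpa [b] using hrange _ (bA a).2
    · simpa [b] using hker _ (bB a).2
  exact ⟨_, _, b.equivFun, b.equivFun_apply_of_apply_eq_smul hb⟩

theorem map_smul_of_map_smul_conj {K A V : Type*} [CommSemiring K] [Semiring A] [Algebra K A]
    [AddCommMonoid V] [Module K V] [Module A V] [IsScalarTower K A V] {Γ : A} (hΓ : Γ * Γ = 1)
    {γ : V → V} (hγ : ∀ (a : A) v, γ (a • v) = (Γ * a * Γ) • γ v) (c : K) (v : V) :
    γ (c • v) = c • γ v := by
  rw [← algebraMap_smul A c v, hγ, ← Algebra.commutes, mul_assoc, hΓ, mul_one, algebraMap_smul]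

theorem GMat.sign_mul_self (n m : ℕ) (i : Fin (n + m)) :
    (if GMat.bdeg n m i then (-1 : ℂ) else 1) * (if GMat.bdeg n m i then -1 else 1) = 1 := by
  split_ifs <;> norm_num

theorem GMat.Gamma_mul_self (n m : ℕ) : GMat.Gamma n m * GMat.Gamma n m = 1 := by
  rw [GMat.Gamma, diagonal_mul_diagonal, ← diagonal_one]
  exact congrArg diagonal (funext (GMat.sign_mul_self n m))

theorem GMat.trace_GammaR (r s : ℕ) : (GMat.GammaR r s).trace = r - s := by
  simp [GMat.GammaR, Matrix.trace_diagonal, Fin.sum_univ_add, sub_eq_add_neg]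

namespace MatrixColumn

variable {N q q' : ℕ}

theorem smul_def (A : Matrix (Fin N) (Fin N) ℂ) (X : Matrix (Fin N) (Fin q) ℂ) :
    A • X = A * X := rfl

theorem exists_eq_mul_of_linearMap
    (f : Matrix (Fin N) (Fin q) ℂ →ₗ[Matrix (Fin N) (Fin N) ℂ] Matrix (Fin N) (Fin q') ℂ) :
    ∃ F : Matrix (Fin q) (Fin q') ℂ, ∀ X, f X = X * F := by
  rcases isEmpty_or_nonempty (Fin N) with hN | ⟨⟨z⟩⟩
  · exact ⟨0, fun X => Subsingleton.elim _ _⟩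
  refine ⟨∑ j, single j z (1 : ℂ) * f (single z j 1), fun X => ?_⟩
  have hX : X = ∑ j, (X * single j z (1 : ℂ)) •
      (single z j (1 : ℂ) : Matrix (Fin N) (Fin q) ℂ) := by
    simp_rw [smul_def, Matrix.mul_assoc, single_mul_single_same, one_mul, ← Matrix.mul_sum,
      sum_single_one, Matrix.mul_one]
  conv_lhs => rw [hX]
  simp_rw [map_sum, map_smul, smul_def, Matrix.mul_sum, ← Matrix.mul_assoc]

theorem eq_of_forall_mul_eq_mul [NeZero N] {A B : Matrix (Fin q) (Fin q') ℂ}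
    (h : ∀ X : Matrix (Fin N) (Fin q) ℂ, X * A = X * B) : A = B := by
  ext j k
  simpa using congr_fun (congr_fun (h (single 0 j 1)) 0) k

theorem trace_eq_of_linearEquiv [NeZero N]
    (f : Matrix (Fin N) (Fin q) ℂ ≃ₗ[Matrix (Fin N) (Fin N) ℂ] Matrix (Fin N) (Fin q') ℂ)
    {Γ : Matrix (Fin N) (Fin N) ℂ} (hΓ : IsUnit Γ) {A : Matrix (Fin q) (Fin q) ℂ}
    {A' : Matrix (Fin q') (Fin q') ℂ} (hf : ∀ X, f (Γ * X * A) = Γ * f X * A') :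
    A.trace = A'.trace := by
  obtain ⟨F, hF⟩ : ∃ F, ∀ X, f X = X * F := exists_eq_mul_of_linearMap f.toLinearMap
  obtain ⟨F', hF'⟩ : ∃ F', ∀ X, f.symm X = X * F' := exists_eq_mul_of_linearMap f.symm.toLinearMap
  refine Matrix.trace_eq_of_mul_eq_mul (F := F) (F' := F')
    (eq_of_forall_mul_eq_mul (N := N) fun X => ?_) (eq_of_forall_mul_eq_mul (N := N) fun X => ?_)
    (eq_of_forall_mul_eq_mul (N := N) fun X => ?_)
  · rw [Matrix.mul_one, ← Matrix.mul_assoc, ← hF, ← hF', f.symm_apply_apply]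
  · rw [Matrix.mul_one, ← Matrix.mul_assoc, ← hF', ← hF, f.apply_symm_apply]
  · have h := hf X
    simp only [hF, Matrix.mul_assoc] at h
    obtain ⟨u, rfl⟩ := hΓ
    simpa [← Matrix.mul_assoc] using congrArg (fun Y => (↑u⁻¹ : Matrix (Fin N) (Fin N) ℂ) * Y) h

theorem eq_of_linearEquiv_conj_GammaR {r s r' s' : ℕ} [NeZero N]
    (f : Matrix (Fin N) (Fin (r + s)) ℂ ≃ₗ[Matrix (Fin N) (Fin N) ℂ]
      Matrix (Fin N) (Fin (r' + s')) ℂ)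
    {Γ : Matrix (Fin N) (Fin N) ℂ} (hΓ : IsUnit Γ)
    (hf : ∀ X, f (Γ * X * GMat.GammaR r s) = Γ * f X * GMat.GammaR r' s') :
    r = r' ∧ s = s' := by
  have hq := trace_eq_of_linearEquiv f isUnit_one (A := 1) (A' := 1) (by simp)
  have hrs := trace_eq_of_linearEquiv f hΓ hf
  simp only [trace_one, Fintype.card_fin, GMat.trace_GammaR] at hq hrs
  push_cast at hq
  constructor
  · exact_mod_cast (by linear_combination (hq + hrs) / 2 : (r : ℂ) = r')
  · exact_mod_cast (by linear_combination (hq - hrs) / 2 : (s : ℂ) = s')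

variable {V : Type*} [AddCommGroup V] [Module ℂ V]
  [Module (Matrix (Fin N) (Fin N) ℂ) V] [IsScalarTower ℂ (Matrix (Fin N) (Fin N) ℂ) V]
  (z : Fin N)

variable (V) in
def corner : Submodule ℂ V :=
  LinearMap.range (DistribSMul.toLinearMap ℂ V (single z z (1 : ℂ)))

def cornerProj : V →ₗ[ℂ] corner V z :=
  (DistribSMul.toLinearMap ℂ V (single z z (1 : ℂ))).rangeRestrict

theorem coe_cornerProj (v : V) : (cornerProj z v : V) = single z z (1 : ℂ) • v := rfl

theorem single_smul_of_mem_corner {w : V} (hw : w ∈ corner V z) :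
    single z z (1 : ℂ) • w = w := by
  obtain ⟨v, rfl⟩ := hw
  simp [← mul_smul]

theorem cornerProj_of_mem {w : V} (hw : w ∈ corner V z) : cornerProj z w = ⟨w, hw⟩ :=
  Subtype.ext (single_smul_of_mem_corner z hw)

variable {z}

def cornerEquiv (φ : corner V z ≃ₗ[ℂ] (Fin q → ℂ)) :
    V ≃ₗ[Matrix (Fin N) (Fin N) ℂ] Matrix (Fin N) (Fin q) ℂ where
  toFun v := of fun i => φ (cornerProj z (single z i (1 : ℂ) • v))
  map_add' v w := by ext; simp
  map_smul' A v := by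
    ext i j
    rw [RingHom.id_apply, smul_def, mul_apply]
    simp only [of_apply, ← mul_smul, single_mul_eq_sum, Finset.sum_smul, smul_assoc, map_sum,
      map_smul, Finset.sum_apply, Pi.smul_apply, smul_eq_mul]
  invFun X := ∑ i, single i z (1 : ℂ) • (φ.symm (X i) : V)
  left_inv v := by
    change ∑ i, single i z (1 : ℂ) • (φ.symm (φ (cornerProj z (single z i 1 • v))) : V) = v
    simp only [LinearEquiv.symm_apply_apply, coe_cornerProj, ← mul_smul, single_mul_single_same,
      one_mul, ← Finset.sum_smul, sum_single_one, one_smul]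
  right_inv X := by
    ext i j
    simp only [of_apply, Finset.smul_sum, ← mul_smul, map_sum, Finset.sum_apply]
    rw [Finset.sum_eq_single i (fun k _ hk => by
      rw [single_mul_single_of_ne _ _ _ _ (Ne.symm hk), zero_smul, map_zero, map_zero,
        Pi.zero_apply]) (by simp), single_mul_single_same, one_mul,
      single_smul_of_mem_corner z (φ.symm (X i)).2, cornerProj_of_mem z (φ.symm (X i)).2]
    simp

theorem cornerEquiv_apply (φ : corner V z ≃ₗ[ℂ] (Fin q → ℂ)) (v : V) (i : Fin N)
    (j : Fin q) : cornerEquiv φ v i j = φ (cornerProj z (single z i (1 : ℂ) • v)) j := rfl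

section Graded

variable {d : Fin N → ℂ} (hd : ∀ i, d i * d i = 1) {γ : V →ₗ[ℂ] V}
  (hγ : ∀ (A : Matrix (Fin N) (Fin N) ℂ) v, γ (A • v) = (diagonal d * A * diagonal d) • γ v)
include hd hγ

theorem single_smul_map (i k : Fin N) (v : V) :
    single i k (1 : ℂ) • γ v = (d i * d k) • γ (single i k (1 : ℂ) • v) := by
  rw [hγ, diagonal_mul_single_mul_diagonal, smul_assoc, smul_smul,
    show d i * d k * (d i * d k) = 1 by linear_combination (d k * d k) * hd i + hd k, one_smul]

theorem cornerProj_smul_map (v : V) :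
    (cornerProj z (d z • γ v) : V) = d z • γ (cornerProj z v) := by
  rw [coe_cornerProj, coe_cornerProj, smul_comm, single_smul_map hd hγ, hd, one_smul]

theorem cornerEquiv_map {σ : Fin q → ℂ} (φ : corner V z ≃ₗ[ℂ] (Fin q → ℂ))
    (hφ : ∀ v j, φ (cornerProj z (d z • γ v)) j = σ j * φ (cornerProj z v) j) (v : V) :
    cornerEquiv φ (γ v) = diagonal d * cornerEquiv φ v * diagonal σ := by
  ext i j
  rw [mul_diagonal, diagonal_mul, cornerEquiv_apply, cornerEquiv_apply, single_smul_map hd hγ,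
    mul_comm, ← smul_smul, map_smul, map_smul, Pi.smul_apply, hφ, smul_eq_mul]
  ring

theorem exists_linearEquiv_conj_GammaR [NeZero N] [Module.Finite (Matrix (Fin N) (Fin N) ℂ) V]
    (hinv : ∀ v, γ (γ v) = v) :
    ∃ r s : ℕ, ∃ e : V ≃ₗ[Matrix (Fin N) (Fin N) ℂ] Matrix (Fin N) (Fin (r + s)) ℂ,
      ∀ v, e (γ v) = diagonal d * e v * GMat.GammaR r s := by
  have : Module.Finite ℂ V := Module.Finite.trans (Matrix (Fin N) (Fin N) ℂ) V
  have hmaps : ∀ w ∈ corner V (0 : Fin N), (d 0 • γ) w ∈ corner V (0 : Fin N) := by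
    rintro _ ⟨v, rfl⟩
    exact ⟨d 0 • γ v, cornerProj_smul_map hd hγ v⟩
  let δ : Module.End ℂ (corner V (0 : Fin N)) := (d 0 • γ).restrict hmaps
  have hδ : ∀ v, cornerProj 0 (d 0 • γ v) = δ (cornerProj 0 v) :=
    fun v => Subtype.ext (cornerProj_smul_map hd hγ v)
  have hδδ : ∀ w, δ (δ w) = w := by
    rintro ⟨_, v, rfl⟩
    change δ (δ (cornerProj 0 v)) = cornerProj 0 v
    rw [← hδ, ← hδ, γ.map_smul, hinv, smul_smul, hd, one_smul]
  obtain ⟨r, s, φ, hφ⟩ := δ.exists_linearEquiv_pi_of_involutive hδδ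
  exact ⟨r, s, cornerEquiv φ, cornerEquiv_map hd hγ φ fun v j => by rw [hδ, hφ]⟩

end Graded

end MatrixColumn

/-- Every left `ℤ₂`-graded finitely generated module over `M(n|m)` (`n ≠ m`),
with grading recorded by an additive involution `γ` compatible with the
grading of `M(n|m)`, is isomorphic as a graded module to `M^{r|s}(n|m)` (the
`(n+m)×(r+s)` matrices with block grading and standard grading involution
`X ↦ Γ X Γ_{r,s}`) for a unique pair `(r,s)` (the pair `(0,0)` corresponding
to the zero module); moreover it is projective. -/
theorem graded_module_classification (n m : ℕ) (hnm : n ≠ m)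
    (V : Type) [AddCommGroup V] [Module (GMat n m) V]
    [Module.Finite (GMat n m) V]
    (γ : V → V)
    (hadd : ∀ v w : V, γ (v + w) = γ v + γ w)
    (hinv : ∀ v : V, γ (γ v) = v)
    (hcomp : ∀ (A : GMat n m) (v : V),
      γ (A • v) = (GMat.Gamma n m * A * GMat.Gamma n m) • γ v) :
    (∃! rs : ℕ × ℕ, Nonempty
      {e : V ≃ₗ[GMat n m] Matrix (Fin (n + m)) (Fin (rs.1 + rs.2)) ℂ //
        ∀ v : V, e (γ v) = GMat.Gamma n m * e v * GMat.GammaR rs.1 rs.2}) ∧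
    Module.Projective (GMat n m) V := by
  have : NeZero (n + m) := ⟨by omega⟩
  let : Module ℂ V := .compHom V (algebraMap ℂ (GMat n m))
  have : IsScalarTower ℂ (GMat n m) V := .of_compHom ℂ (GMat n m) V
  let γL : V →ₗ[ℂ] V := ⟨⟨γ, hadd⟩, map_smul_of_map_smul_conj (GMat.Gamma_mul_self n m) hcomp⟩
  obtain ⟨r, s, e, he⟩ :=
    MatrixColumn.exists_linearEquiv_conj_GammaR (GMat.sign_mul_self n m) (γ := γL) hcomp hinv
  refine ⟨⟨(r, s), ⟨⟨e, he⟩⟩, ?_⟩, Module.projective_of_isSemisimpleRing _ _⟩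
  rintro ⟨r', s'⟩ ⟨e', he'⟩
  have hsymm : ∀ X, e'.symm (GMat.Gamma n m * X * GMat.GammaR r' s') = γ (e'.symm X) :=
    fun X => e'.symm_apply_eq.mpr (by rw [he', e'.apply_symm_apply])
  obtain ⟨rfl, rfl⟩ := MatrixColumn.eq_of_linearEquiv_conj_GammaR (e'.symm.trans e)
    (IsUnit.of_mul_eq_one _ (GMat.Gamma_mul_self n m))
    fun X => by rw [LinearEquiv.trans_apply, hsymm]; exact he _
  rfl

end
end
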